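/- arXiv:2503.01912 — 2 statements merged into one kernel-verified Lean document; each statement's English description precedes it below -/
import Mathlib

section
/- Let J be an m×n real matrix, F ∈ ℝᵐ, g = JᵀF. For μ > 0 let s(μ) = -(JᵀJ + μI)⁻¹ g. If g ≠ 0, then the map μ ↦ ‖s(μ)‖₂ is strictly monotone decreasing on (0, ∞). -/
/-!
Write `B = A + a • 1` for `0 < a < b` and `A = JᵀJ`. With `y = s(b)` and `z = B⁻¹ y`, the resolvent
identity gives `s(a) = y + (b - a) • z`, while `y = B z`. Hence
`‖s(a)‖² - ‖s(b)‖² = (b - a) (2 ⟪z, B z⟫ + (b - a) ‖z‖²)`, which is positive because `B` is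
positive definite and `z ≠ 0` (as `g ≠ 0`).
-/

open Matrix Set

namespace Matrix

variable {ι : Type*}

theorem PosSemidef.posDef_add_smul_one [DecidableEq ι] {A : Matrix ι ι ℝ} (hA : A.PosSemidef)
    {μ : ℝ} (hμ : 0 < μ) : (A + μ • 1).PosDef :=
  PosDef.posSemidef_add hA (PosDef.one.smul hμ)

variable [Fintype ι]

theorem PosDef.dotProduct_self_lt_add_smul {B : Matrix ι ι ℝ} (hB : B.PosDef) {z : ι → ℝ}
    (hz : z ≠ 0) {c : ℝ} (hc : 0 < c) :
    (B *ᵥ z) ⬝ᵥ (B *ᵥ z) < (B *ᵥ z + c • z) ⬝ᵥ (B *ᵥ z + c • z) := by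
  have hBz : 0 < z ⬝ᵥ (B *ᵥ z) := by simpa using hB.dotProduct_mulVec_pos hz
  have hzz : 0 < z ⬝ᵥ z := by simpa using dotProduct_star_self_pos_iff.mpr hz
  simp only [add_dotProduct, dotProduct_add, smul_dotProduct, dotProduct_smul, smul_eq_mul,
    dotProduct_comm (B *ᵥ z) z]
  nlinarith [mul_pos hc hBz, mul_pos (mul_pos hc hc) hzz]

variable [DecidableEq ι]

theorem mulVec_nonsing_inv_mulVec {R : Type*} [CommRing R] {M : Matrix ι ι R} (hM : IsUnit M)
    (v : ι → R) : M *ᵥ (M⁻¹ *ᵥ v) = v := by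
  rw [mulVec_mulVec, mul_nonsing_inv _ ((isUnit_iff_isUnit_det M).mp hM), one_mulVec]

theorem nonsing_inv_mulVec_mulVec {R : Type*} [CommRing R] {M : Matrix ι ι R} (hM : IsUnit M)
    (v : ι → R) : M⁻¹ *ᵥ (M *ᵥ v) = v := by
  rw [mulVec_mulVec, nonsing_inv_mul _ ((isUnit_iff_isUnit_det M).mp hM), one_mulVec]

theorem PosSemidef.strictAntiOn_dotProduct_self_inv_add_smul_one_mulVec {A : Matrix ι ι ℝ}
    (hA : A.PosSemidef) {g : ι → ℝ} (hg : g ≠ 0) :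
    StrictAntiOn (fun μ : ℝ => ((A + μ • 1)⁻¹ *ᵥ g) ⬝ᵥ ((A + μ • 1)⁻¹ *ᵥ g)) (Ioi 0) := by
  intro a ha b hb hab
  set B := A + a • (1 : Matrix ι ι ℝ)
  have hB : B.PosDef := hA.posDef_add_smul_one ha
  have hC : IsUnit (A + b • 1) := (hA.posDef_add_smul_one hb).isUnit
  set y := (A + b • 1)⁻¹ *ᵥ g
  set z := B⁻¹ *ᵥ y
  have hBz : B *ᵥ z = y := mulVec_nonsing_inv_mulVec hB.isUnit y
  have hg_eq : g = B *ᵥ y + (b - a) • y := by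
    conv_lhs => rw [← mulVec_nonsing_inv_mulVec hC g]
    simp only [B, add_mulVec, smul_mulVec, one_mulVec]
    module
  have hx : B⁻¹ *ᵥ g = B *ᵥ z + (b - a) • z := by
    rw [hg_eq, mulVec_add, nonsing_inv_mulVec_mulVec hB.isUnit, mulVec_smul, hBz]
  have hz : z ≠ 0 := by
    intro h
    exact hg (by rw [hg_eq, ← hBz, h]; simp)
  change y ⬝ᵥ y < (B⁻¹ *ᵥ g) ⬝ᵥ (B⁻¹ *ᵥ g)
  rw [hx, ← hBz]
  exact hB.dotProduct_self_lt_add_smul hz (sub_pos.mpr hab)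

end Matrix

theorem lm_step_norm_strictAntiOn_general (m n : ℕ) (J : Matrix (Fin m) (Fin n) ℝ)
    (g : Fin n → ℝ) (hg0 : g ≠ 0)
    (s : ℝ → Fin n → ℝ)
    (hs : ∀ μ : ℝ, 0 < μ →
      s μ = -((J.transpose * J + μ • (1 : Matrix (Fin n) (Fin n) ℝ))⁻¹.mulVec g)) :
    StrictAntiOn (fun μ : ℝ => Real.sqrt (∑ i, (s μ i) ^ 2)) (Set.Ioi 0) := by
  have hA : (J.transpose * J).PosSemidef := by
    simpa using posSemidef_conjTranspose_mul_self J
  have hsq : ∀ μ ∈ Ioi (0 : ℝ), ∑ i, s μ i ^ 2 =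
      ((J.transpose * J + μ • 1)⁻¹ *ᵥ g) ⬝ᵥ ((J.transpose * J + μ • 1)⁻¹ *ᵥ g) := by
    intro μ hμ
    simp [hs μ hμ, dotProduct, sq]
  intro a ha b hb hab
  refine Real.sqrt_lt_sqrt (by positivity) ?_
  simp only [hsq a ha, hsq b hb]
  exact hA.strictAntiOn_dotProduct_self_inv_add_smul_one_mulVec hg0 ha hb hab

/-- If `g = JᵀF ≠ 0` then `μ ↦ ‖s(μ)‖₂`, with `s(μ) = -(JᵀJ + μI)⁻¹ g`, is
strictly monotone decreasing on `(0, ∞)`. -/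
theorem lm_step_norm_strictAntiOn (m n : ℕ) (J : Matrix (Fin m) (Fin n) ℝ)
    (F : Fin m → ℝ) (g : Fin n → ℝ) (hg : g = J.transpose.mulVec F) (hg0 : g ≠ 0)
    (s : ℝ → Fin n → ℝ)
    (hs : ∀ μ : ℝ, 0 < μ →
      s μ = -((J.transpose * J + μ • (1 : Matrix (Fin n) (Fin n) ℝ))⁻¹.mulVec g)) :
    StrictAntiOn (fun μ : ℝ => Real.sqrt (∑ i, (s μ i) ^ 2)) (Set.Ioi 0) :=
  lm_step_norm_strictAntiOn_general m n J g hg0 s hs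
end

section
/- Deflation eliminates known solutions: let F : ℝⁿ → ℝⁿ be differentiable at r with F(r) = 0 and with Jacobian F'(r) satisfying ‖F'(r)‖ ≤ M, let α ≥ 0 and p > 1, and define F̂(a) = (‖a - r‖⁻ᵖ + α) F(a). If additionally F'(r) is invertible, then liminf over a → r (a ≠ r) of ‖F̂(a)‖ is > 0. -/
lemma aux_norm_le_sqrt (n : ℕ) (v : Fin n → ℝ) :
    ‖v‖ ≤ Real.sqrt (∑ i, v i ^ 2) := by
  refine (pi_norm_le_iff_of_nonneg (Real.sqrt_nonneg _)).2 fun i => ?_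
  rw [Real.norm_eq_abs, ← Real.sqrt_sq_eq_abs]
  exact Real.sqrt_le_sqrt
    (Finset.single_le_sum (fun j _ => sq_nonneg (v j)) (Finset.mem_univ i))

lemma aux_sqrt_le_norm (n : ℕ) (v : Fin n → ℝ) :
    Real.sqrt (∑ i, v i ^ 2) ≤ Real.sqrt n * ‖v‖ := by
  rw [← Real.sqrt_sq (norm_nonneg v), ← Real.sqrt_mul (by positivity : (0:ℝ) ≤ (n:ℝ))]
  apply Real.sqrt_le_sqrt
  calc ∑ i, v i ^ 2 ≤ ∑ _i : Fin n, ‖v‖ ^ 2 := by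
        refine Finset.sum_le_sum fun i _ => ?_
        have h1 : ‖v i‖ ≤ ‖v‖ := norm_le_pi_norm v i
        have h2 : (0:ℝ) ≤ ‖v i‖ := norm_nonneg _
        have : v i ^ 2 = ‖v i‖ ^ 2 := by rw [Real.norm_eq_abs, sq_abs]
        nlinarith
      _ = n * ‖v‖ ^ 2 := by simp [mul_comm]

/-- Deflation eliminates known solutions: if `F(r) = 0`, `F` is differentiable
at `r` with invertible Jacobian, `α ≥ 0` and `p > 1`, then the deflated map
`F̂(a) = (‖a - r‖⁻ᵖ + α) F(a)` is bounded away from `0` near `r`: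
`liminf_{a → r} ‖F̂(a)‖ > 0`. -/
theorem deflation_eliminates_solutions (n : ℕ)
    (F : (Fin n → ℝ) → (Fin n → ℝ)) (r : Fin n → ℝ)
    (L : (Fin n → ℝ) →L[ℝ] (Fin n → ℝ))
    (hF : HasFDerivAt F L r) (hFr : F r = 0) (hL : Function.Bijective L)
    (α : ℝ) (hα : 0 ≤ α) (p : ℝ) (hp : 1 < p)
    (Fdef : (Fin n → ℝ) → (Fin n → ℝ))
    (hFdef : ∀ a, Fdef a =
      ((Real.sqrt (∑ i, (a i - r i) ^ 2)) ^ (-p) + α) • F a) :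
    ∃ c > 0, ∃ δ > 0, ∀ a : Fin n → ℝ,
      0 < Real.sqrt (∑ i, (a i - r i) ^ 2) →
      Real.sqrt (∑ i, (a i - r i) ^ 2) < δ →
      c ≤ Real.sqrt (∑ i, (Fdef a i) ^ 2) := by
  -- build a continuous linear equiv from L
  let E : (Fin n → ℝ) ≃L[ℝ] (Fin n → ℝ) :=
    (LinearEquiv.ofBijective (L : (Fin n → ℝ) →ₗ[ℝ] (Fin n → ℝ)) hL).toContinuousLinearEquiv
  set K : ℝ := ‖(E.symm : (Fin n → ℝ) →L[ℝ] (Fin n → ℝ))‖ with hK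
  have hK0 : 0 ≤ K := norm_nonneg _
  have hbound : ∀ v, ‖v‖ ≤ K * ‖L v‖ := by
    intro v
    have hEv : (E.symm : (Fin n → ℝ) →L[ℝ] (Fin n → ℝ)) (L v) = v := by
      have : L v = E v := rfl
      rw [this]
      exact E.symm_apply_apply v
    calc ‖v‖ = ‖(E.symm : (Fin n → ℝ) →L[ℝ] (Fin n → ℝ)) (L v)‖ := by rw [hEv]
      _ ≤ K * ‖L v‖ := ContinuousLinearMap.le_opNorm _ _
  set m : ℝ := (K + 1)⁻¹ with hm
  have hm0 : 0 < m := by positivity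
  have hLlower : ∀ v, m * ‖v‖ ≤ ‖L v‖ := by
    intro v
    have h1 := hbound v
    have h2 : (0:ℝ) ≤ ‖L v‖ := norm_nonneg _
    rw [hm, inv_mul_le_iff₀ (by positivity)]
    nlinarith
  -- little-o bound
  have hlo := hF.isLittleO.bound (half_pos hm0)
  rw [Metric.eventually_nhds_iff] at hlo
  obtain ⟨δ₁, hδ₁pos, hδ₁⟩ := hlo
  refine ⟨(m / 2) / (Real.sqrt n + 1), by positivity, min δ₁ 1,
    lt_min hδ₁pos one_pos, fun a ht0 htδ => ?_⟩
  set t : ℝ := Real.sqrt (∑ i, (a i - r i) ^ 2) with htdef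
  set s : ℝ := t ^ (-p) + α with hsdef
  have hs0 : 0 ≤ s := add_nonneg (Real.rpow_nonneg (Real.sqrt_nonneg _) _) hα
  have hvsub : ∀ i, (a - r) i = a i - r i := fun i => rfl
  have htu : ‖a - r‖ ≤ t := by
    have := aux_norm_le_sqrt n (a - r)
    simpa [hvsub] using this
  have hut : t ≤ (Real.sqrt n + 1) * ‖a - r‖ := by
    have h1 := aux_sqrt_le_norm n (a - r)
    have h2 : (0:ℝ) ≤ ‖a - r‖ := norm_nonneg _
    have h3 : Real.sqrt (∑ i, ((a-r) i) ^ 2) = t := by simp [hvsub, htdef]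
    nlinarith [h1, h3]
  -- apply the little-o bound
  have hdist : dist a r < δ₁ := by
    rw [dist_eq_norm]
    exact lt_of_le_of_lt htu (lt_of_lt_of_le htδ (min_le_left _ _))
  have hlo2 := hδ₁ hdist
  rw [hFr, sub_zero] at hlo2
  -- lower bound on ‖F a‖
  have hFa : m / 2 * ‖a - r‖ ≤ ‖F a‖ := by
    have h1 := hLlower (a - r)
    have h2 : ‖L (a - r)‖ - ‖F a‖ ≤ ‖F a - L (a - r)‖ := by
      have := norm_sub_norm_le (L (a - r)) (F a)
      rwa [norm_sub_rev] at this
    have h3 : ‖F a - L (a - r)‖ ≤ m / 2 * ‖a - r‖ := by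
      simpa [Real.norm_eq_abs] using hlo2
    linarith
  have hFa2 : m / 2 * ‖a - r‖ ≤ Real.sqrt (∑ i, (F a i) ^ 2) :=
    le_trans hFa (aux_norm_le_sqrt n (F a))
  -- compute the deflated norm
  have hdefl : Real.sqrt (∑ i, (Fdef a i) ^ 2) = s * Real.sqrt (∑ i, (F a i) ^ 2) := by
    have : ∀ i, Fdef a i = s * F a i := by
      intro i; rw [hFdef a]; rfl
    simp_rw [this, mul_pow, ← Finset.mul_sum]
    rw [Real.sqrt_mul (sq_nonneg s), Real.sqrt_sq hs0]
  rw [hdefl]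
  -- chain of inequalities
  have htpos : 0 < t := ht0
  have ht1 : t ≤ 1 := le_of_lt (lt_of_lt_of_le htδ (min_le_right _ _))
  have hrpow : 1 ≤ t ^ (1 - p) :=
    Real.one_le_rpow_of_pos_of_le_one_of_nonpos htpos ht1 (by linarith)
  have hrp0 : 0 < t ^ (-p) := Real.rpow_pos_of_pos htpos _
  have hsplit : t ^ (-p) * t = t ^ (1 - p) := by
    rw [show (1 - p) = -p + 1 by ring, Real.rpow_add htpos, Real.rpow_one]
  set eF : ℝ := Real.sqrt (∑ i, (F a i) ^ 2) with heF
  have heF0 : 0 ≤ eF := Real.sqrt_nonneg _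
  have hq : (0:ℝ) < Real.sqrt n + 1 := by positivity
  have h4 : t / (Real.sqrt n + 1) ≤ ‖a - r‖ := by
    rw [div_le_iff₀ hq]
    nlinarith [hut, norm_nonneg (a - r)]
  have h5 : m / 2 * (t / (Real.sqrt n + 1)) ≤ eF :=
    le_trans (mul_le_mul_of_nonneg_left h4 (by positivity)) hFa2
  calc m / 2 / (Real.sqrt n + 1)
      = (m / 2 / (Real.sqrt n + 1)) * 1 := (mul_one _).symm
    _ ≤ (m / 2 / (Real.sqrt n + 1)) * t ^ (1 - p) :=
        mul_le_mul_of_nonneg_left hrpow (by positivity)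
    _ = t ^ (-p) * (m / 2 * (t / (Real.sqrt n + 1))) := by
        rw [← hsplit]; field_simp
    _ ≤ t ^ (-p) * eF := mul_le_mul_of_nonneg_left h5 (le_of_lt hrp0)
    _ ≤ s * eF := mul_le_mul_of_nonneg_right (by rw [hsdef]; linarith) heF0
end
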